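/- arXiv:2310.15826 — 3 statements merged into one kernel-verified Lean document; each statement's English description precedes it below -/
import Mathlib

section
/- Let (P_T, D_t) be a drift process. The process has drift if and only if there exist P_T-non-null time windows W, W' ⊆ T such that the mean distributions differ: D_W ≠ D_{W'}. -/
/-!
Both sides say that `κ` is not `P`-a.e. constant. For the drift side this is Fubini: the
diagonal condition `κ t = κ s` holds for a.e. pair iff a.e. `κ t` equals one fixed `κ t₀`.
For the window side, the window mean is `D_W(B) = P(W)⁻¹ (P ⊗ₘ κ)(W ×ˢ B)`, so if all window
means agree with some `ν`, then `P ⊗ₘ κ` and `P.prod ν` agree on rectangles; equality of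
composition products determines the kernel a.e. because `Fin d → ℝ` is countably generated.
-/

open MeasureTheory ProbabilityTheory
open scoped ENNReal

namespace MeasureTheory.Measure

variable {α γ : Type*} {mα : MeasurableSpace α} {μ : Measure α}

lemma ae_prod_eq_iff_exists_ae_eq [SFinite μ] [NeZero μ] {f : α → γ} :
    (∀ᵐ p ∂μ.prod μ, f p.1 = f p.2) ↔ ∃ c, ∀ᵐ a ∂μ, f a = c := by
  refine ⟨fun h ↦ ?_, fun ⟨c, h⟩ ↦ ?_⟩
  · obtain ⟨a, ha⟩ := (ae_ae_of_ae_prod h).exists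
    exact ⟨f a, ha.mono fun _ ↦ Eq.symm⟩
  · filter_upwards [quasiMeasurePreserving_fst.ae h, quasiMeasurePreserving_snd.ae h]
      with p h1 h2 using h1.trans h2.symm

end MeasureTheory.Measure

namespace ProbabilityTheory

variable {α β : Type*} {mα : MeasurableSpace α} {mβ : MeasurableSpace β}
  {μ : Measure α} {κ : Kernel α β} {s : Set α}

lemma measure_smul_cond (hs : μ s ≠ ∞) : μ s • μ[|s] = μ.restrict s := by
  rcases eq_or_ne (μ s) 0 with h0 | h0
  · simp [h0, Measure.restrict_eq_zero.2 h0]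
  · rw [cond, smul_smul, ENNReal.mul_inv_cancel h0 hs, one_smul]

lemma compProd_prod_eq_mul_comp_cond [IsFiniteMeasure μ] [IsSFiniteKernel κ] {B : Set β}
    (hs : MeasurableSet s) (hB : MeasurableSet B) :
    (μ ⊗ₘ κ) (s ×ˢ B) = μ s * (κ ∘ₘ μ[|s]) B := by
  rw [← smul_eq_mul, ← Measure.smul_apply, ← Measure.comp_smul,
    measure_smul_cond (measure_ne_top _ _), Measure.bind_apply hB κ.aemeasurable,
    Measure.compProd_apply_prod hs hB]

lemma compProd_eq_prod_of_forall_comp_cond_eq [IsFiniteMeasure μ] [IsSFiniteKernel κ]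
    {ν : Measure β} [SigmaFinite ν] (h : ∀ s, MeasurableSet s → μ s ≠ 0 → κ ∘ₘ μ[|s] = ν) :
    μ ⊗ₘ κ = μ.prod ν := by
  refine (Measure.prod_eq fun s B hs hB ↦ ?_).symm
  rw [compProd_prod_eq_mul_comp_cond hs hB]
  rcases eq_or_ne (μ s) 0 with h0 | h0
  · simp [h0]
  · rw [h s hs h0]

lemma ae_eq_of_forall_comp_cond_eq [MeasurableSpace.CountableOrCountablyGenerated α β]
    [IsFiniteMeasure μ] [IsFiniteKernel κ] {ν : Measure β} [IsFiniteMeasure ν]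
    (h : ∀ s, MeasurableSet s → μ s ≠ 0 → κ ∘ₘ μ[|s] = ν) : ∀ᵐ a ∂μ, κ a = ν :=
  Kernel.ae_eq_of_compProd_eq (η := Kernel.const α ν) <| by
    rw [Measure.compProd_const, compProd_eq_prod_of_forall_comp_cond_eq h]

lemma comp_cond_eq_of_ae_eq [IsFiniteMeasure μ] {ν : Measure β} (h : ∀ᵐ a ∂μ, κ a = ν)
    (hs : μ s ≠ 0) : κ ∘ₘ μ[|s] = ν := by
  have := cond_isProbabilityMeasure hs
  rw [Measure.bind_congr_right (cond_absolutelyContinuous.ae_le h), Measure.bind_const,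
    measure_univ, one_smul]

lemma exists_ae_eq_iff_forall_comp_cond_eq [MeasurableSpace.CountableOrCountablyGenerated α β]
    [IsFiniteMeasure μ] [IsFiniteKernel κ] :
    (∃ ν, ∀ᵐ a ∂μ, κ a = ν) ↔ ∀ s s', MeasurableSet s → MeasurableSet s' → μ s ≠ 0 →
      μ s' ≠ 0 → κ ∘ₘ μ[|s] = κ ∘ₘ μ[|s'] := by
  refine ⟨fun ⟨ν, h⟩ s s' _ _ hs hs' ↦ ?_, fun h ↦ ⟨_, ae_eq_of_forall_comp_cond_eq
    fun s hs h0 ↦ h s .univ hs .univ h0 fun h' ↦ h0 (measure_mono_null (Set.subset_univ s) h')⟩⟩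
  rw [comp_cond_eq_of_ae_eq h hs, comp_cond_eq_of_ae_eq h hs']

end ProbabilityTheory

/-- A drift process has drift iff there are two `P`-non-null time windows
whose mean distributions differ. -/
theorem drift_iff_window_means_differ {d : ℕ}
    (P : Measure (Set.Icc (0:ℝ) 1)) [IsProbabilityMeasure P]
    (κ : Kernel (Set.Icc (0:ℝ) 1) (Fin d → ℝ)) [IsMarkovKernel κ] :
    (P.prod P) {p | κ p.1 ≠ κ p.2} > 0 ↔
      ∃ W W' : Set (Set.Icc (0:ℝ) 1), MeasurableSet W ∧ MeasurableSet W' ∧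
        P W ≠ 0 ∧ P W' ≠ 0 ∧
        (P[|W]).bind (fun t => κ t) ≠ (P[|W']).bind (fun t => κ t) := by
  rw [gt_iff_lt, pos_iff_ne_zero, ← not_iff_not, not_not]
  refine ae_iff.symm.trans ?_
  rw [Measure.ae_prod_eq_iff_exists_ae_eq, exists_ae_eq_iff_forall_comp_cond_eq]
  push Not
  rfl
end

section
/- Let (P_T, D_t) be a drift process with holistic distribution D, and let L ⊆ X be measurable with D_T̄(L) > 0 (where D_T̄ is the mean distribution). Then the restriction of the drift process onto L, given by the kernel A ↦ D_t(A ∩ L)/D_t(L) (defined on the active time {t : D_t(L) > 0}) together with the time distribution W ↦ D(W × L)/D(T × L), is again a drift process; moreover, its holistic distribution equals D(· | T × L), the conditional of the original holistic distribution on the event that the data point lies in L. -/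
open MeasureTheory ProbabilityTheory

/-- The restriction of a drift process onto a measurable set `L` of positive mean mass
is again a drift process (kernel `A ↦ κ t (A ∩ L) / κ t L` on the active time, time
distribution `W ↦ D(L × W) / D(L × T)`), and its holistic distribution is the
conditional of the original holistic distribution on the event that the data lies in `L`. -/
theorem restriction_is_drift_process {d : ℕ}
    (P : Measure (Set.Icc (0:ℝ) 1)) [IsProbabilityMeasure P]
    (κ : Kernel (Set.Icc (0:ℝ) 1) (Fin d → ℝ)) [IsMarkovKernel κ]
    (D : Measure ((Fin d → ℝ) × Set.Icc (0:ℝ) 1)) [IsProbabilityMeasure D]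
    (hD : ∀ (A : Set (Fin d → ℝ)) (W : Set (Set.Icc (0:ℝ) 1)),
      MeasurableSet A → MeasurableSet W →
      D (A ×ˢ W) = ∫⁻ t in W, κ t A ∂P)
    (L : Set (Fin d → ℝ)) (hL : MeasurableSet L)
    (hpos : (P.bind fun t => κ t) L ≠ 0) :
    ∃ (κL : Kernel (Set.Icc (0:ℝ) 1) (Fin d → ℝ))
      (PL : Measure (Set.Icc (0:ℝ) 1)),
      IsProbabilityMeasure PL ∧ IsMarkovKernel κL ∧
      (∀ t, κ t L ≠ 0 → κL t = (κ t)[|L]) ∧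
      (∀ W : Set (Set.Icc (0:ℝ) 1), MeasurableSet W →
        PL W = D (L ×ˢ W) / D (L ×ˢ Set.univ)) ∧
      (∀ (A : Set (Fin d → ℝ)) (W : Set (Set.Icc (0:ℝ) 1)),
        MeasurableSet A → MeasurableSet W →
        ∫⁻ t in W, κL t A ∂PL = (D[|L ×ˢ Set.univ]) (A ×ˢ W)) := by
  classical
  have hs : MeasurableSet (L ×ˢ (Set.univ : Set (Set.Icc (0:ℝ) 1))) :=
    hL.prod MeasurableSet.univ
  have hc_eq : D (L ×ˢ (Set.univ : Set (Set.Icc (0:ℝ) 1))) = ∫⁻ t, κ t L ∂P := by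
    rw [hD L Set.univ hL MeasurableSet.univ, Measure.restrict_univ]
  have hc0 : D (L ×ˢ (Set.univ : Set (Set.Icc (0:ℝ) 1))) ≠ 0 := by
    rw [hc_eq, ← Measure.bind_apply hL κ.measurable.aemeasurable]
    exact hpos
  have hmeas0 : MeasurableSet {t : Set.Icc (0:ℝ) 1 | κ t L = 0} :=
    (κ.measurable_coe hL) (measurableSet_singleton 0)
  let κL : Kernel (Set.Icc (0:ℝ) 1) (Fin d → ℝ) :=
    ⟨fun t => if κ t L = 0 then κ t else (κ t)[|L], by
      apply Measure.measurable_of_measurable_coe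
      intro A hA
      simp only [apply_ite (fun μ : Measure (Fin d → ℝ) => μ A), cond_apply hL]
      exact Measurable.ite hmeas0 (κ.measurable_coe hA)
        (((κ.measurable_coe hL).inv).mul (κ.measurable_coe (hL.inter hA)))⟩
  haveI : IsMarkovKernel κL := by
    constructor
    intro t
    show IsProbabilityMeasure (if κ t L = 0 then κ t else (κ t)[|L])
    split_ifs with h
    · infer_instance
    · exact cond_isProbabilityMeasure h
  have hκL : ∀ t A, κL t A = if κ t L = 0 then κ t A else (κ t L)⁻¹ * κ t (L ∩ A) := by
    intro t A
    show (if κ t L = 0 then κ t else (κ t)[|L]) A = _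
    split_ifs with h
    · rfl
    · exact cond_apply hL (κ t) A
  let PL : Measure (Set.Icc (0:ℝ) 1) :=
    (D[|L ×ˢ (Set.univ : Set (Set.Icc (0:ℝ) 1))]).map Prod.snd
  haveI : IsProbabilityMeasure (D[|L ×ˢ (Set.univ : Set (Set.Icc (0:ℝ) 1))]) :=
    cond_isProbabilityMeasure hc0
  haveI : IsProbabilityMeasure PL := Measure.isProbabilityMeasure_map measurable_snd.aemeasurable
  have hPL : ∀ W : Set (Set.Icc (0:ℝ) 1), MeasurableSet W →
      PL W = D (L ×ˢ W) / D (L ×ˢ (Set.univ : Set (Set.Icc (0:ℝ) 1))) := by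
    intro W hW
    have h1 : (L ×ˢ (Set.univ : Set (Set.Icc (0:ℝ) 1))) ∩ (Prod.snd ⁻¹' W) = L ×ˢ W := by
      ext x; simp [Set.mem_prod, and_comm]
    rw [show PL W = (D[|L ×ˢ (Set.univ : Set (Set.Icc (0:ℝ) 1))]) (Prod.snd ⁻¹' W) from
        Measure.map_apply measurable_snd hW, cond_apply hs, h1, ENNReal.div_eq_inv_mul]
  refine ⟨κL, PL, inferInstance, inferInstance, ?_, hPL, ?_⟩
  · intro t ht
    show (if κ t L = 0 then κ t else (κ t)[|L]) = (κ t)[|L]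
    rw [if_neg ht]
  · intro A W hA hW
    have hPLd : PL = (D (L ×ˢ (Set.univ : Set (Set.Icc (0:ℝ) 1))))⁻¹ •
        (P.withDensity fun t => κ t L) := by
      ext W hW
      rw [hPL W hW, hD L W hL hW, Measure.smul_apply, smul_eq_mul,
        withDensity_apply _ hW, ENNReal.div_eq_inv_mul]
    have hκLA : Measurable fun t => κL t A := κL.measurable_coe hA
    have hkey : ∀ t, κ t L * κL t A = κ t (A ∩ L) := by
      intro t
      rw [hκL]
      split_ifs with h
      · rw [h, zero_mul]
        symm
        exact le_antisymm (h ▸ measure_mono Set.inter_subset_right) zero_le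
      · rw [← mul_assoc, ENNReal.mul_inv_cancel h (measure_ne_top _ _), one_mul,
          Set.inter_comm]
    calc ∫⁻ t in W, κL t A ∂PL
        = (D (L ×ˢ (Set.univ : Set (Set.Icc (0:ℝ) 1))))⁻¹ *
            ∫⁻ t in W, κL t A ∂(P.withDensity fun t => κ t L) := by
          rw [hPLd, Measure.restrict_smul, lintegral_smul_measure, smul_eq_mul]
      _ = (D (L ×ˢ (Set.univ : Set (Set.Icc (0:ℝ) 1))))⁻¹ *
            ∫⁻ t in W, κ t L * κL t A ∂P := by
          rw [restrict_withDensity hW,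
            lintegral_withDensity_eq_lintegral_mul _ (κ.measurable_coe hL) hκLA]
          rfl
      _ = (D (L ×ˢ (Set.univ : Set (Set.Icc (0:ℝ) 1))))⁻¹ * D ((A ∩ L) ×ˢ W) := by
          rw [hD (A ∩ L) W (hA.inter hL) hW]
          congr 1
          exact lintegral_congr fun t => hkey t
      _ = (D[|L ×ˢ (Set.univ : Set (Set.Icc (0:ℝ) 1))]) (A ×ˢ W) := by
          rw [cond_apply hs]
          congr 2
          ext x
          simp only [Set.mem_inter_iff, Set.mem_prod, Set.mem_univ, and_true]
          tauto
end

section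
/- If L ⊆ X is a drift segment for a drift process (P_T, D_t), then every D_T̄-non-null measurable subset L' ⊆ L is also a drift segment. -/
open MeasureTheory ProbabilityTheory

/-- The time distribution of the restriction of the process onto `L ⊆ X`:
`W ↦ D(W × L | T × L)`, expressed via the holistic distribution on `X × T`. -/
noncomputable def timeDist {d : ℕ}
    (D : Measure ((Fin d → ℝ) × Set.Icc (0:ℝ) 1)) (L : Set (Fin d → ℝ)) :
    Measure (Set.Icc (0:ℝ) 1) :=
  (D[|L ×ˢ (Set.univ : Set (Set.Icc (0:ℝ) 1))]).map Prod.snd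

/-- `L` is a drift segment: a `D_T̄`-non-null measurable set such that the restricted
process (kernel `t ↦ (κ t)(·|L)`, time distribution `W ↦ D(W × L | T × L)`) has no drift. -/
def IsDriftSegment {d : ℕ}
    (κ : Kernel (Set.Icc (0:ℝ) 1) (Fin d → ℝ))
    (D : Measure ((Fin d → ℝ) × Set.Icc (0:ℝ) 1)) (L : Set (Fin d → ℝ)) : Prop :=
  MeasurableSet L ∧ D (L ×ˢ (Set.univ : Set (Set.Icc (0:ℝ) 1))) ≠ 0 ∧
    ((timeDist D L).prod (timeDist D L)) {p | (κ p.1)[|L] ≠ (κ p.2)[|L]} = 0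

lemma timeDist_apply {d : ℕ}
    (D : Measure ((Fin d → ℝ) × Set.Icc (0:ℝ) 1))
    (L : Set (Fin d → ℝ)) (hL : MeasurableSet L)
    (W : Set (Set.Icc (0:ℝ) 1)) (hW : MeasurableSet W) :
    timeDist D L W = (D (L ×ˢ (Set.univ : Set (Set.Icc (0:ℝ) 1))))⁻¹ * D (L ×ˢ W) := by
  rw [timeDist, Measure.map_apply measurable_snd hW,
    cond_apply (hL.prod MeasurableSet.univ)]
  have hset : (L ×ˢ (Set.univ : Set (Set.Icc (0:ℝ) 1))) ∩ Prod.snd ⁻¹' W = L ×ˢ W := by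
    ext p; simp [Set.mem_prod]
  rw [hset]

instance timeDist_sfinite {d : ℕ}
    (D : Measure ((Fin d → ℝ) × Set.Icc (0:ℝ) 1)) [IsFiniteMeasure D]
    (L : Set (Fin d → ℝ)) : SFinite (timeDist D L) := by
  unfold timeDist; infer_instance

/-- Every non-null measurable subset of a drift segment is again a drift segment. -/
theorem driftSegment_subset {d : ℕ}
    (P : Measure (Set.Icc (0:ℝ) 1)) [IsProbabilityMeasure P]
    (κ : Kernel (Set.Icc (0:ℝ) 1) (Fin d → ℝ)) [IsMarkovKernel κ]
    (D : Measure ((Fin d → ℝ) × Set.Icc (0:ℝ) 1)) [IsProbabilityMeasure D]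
    (hD : ∀ (A : Set (Fin d → ℝ)) (W : Set (Set.Icc (0:ℝ) 1)),
      MeasurableSet A → MeasurableSet W →
      D (A ×ˢ W) = ∫⁻ t in W, κ t A ∂P)
    (L : Set (Fin d → ℝ)) (hseg : IsDriftSegment κ D L)
    (L' : Set (Fin d → ℝ)) (hL' : MeasurableSet L') (hsub : L' ⊆ L)
    (hpos : D (L' ×ˢ (Set.univ : Set (Set.Icc (0:ℝ) 1))) ≠ 0) :
    IsDriftSegment κ D L' := by
  obtain ⟨hmL, hDL, hdrift⟩ := hseg
  refine ⟨hL', hpos, ?_⟩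
  -- absolute continuity of time distributions
  have hac : timeDist D L' ≪ timeDist D L := by
    refine Measure.AbsolutelyContinuous.mk (fun W hW h0 => ?_)
    rw [timeDist_apply D L hmL W hW] at h0
    have hinv : (D (L ×ˢ (Set.univ : Set (Set.Icc (0:ℝ) 1))))⁻¹ ≠ 0 :=
      ENNReal.inv_ne_zero.mpr (measure_ne_top D _)
    have hLW : D (L ×ˢ W) = 0 := by
      rcases mul_eq_zero.mp h0 with h | h
      · exact absurd h hinv
      · exact h
    have hL'W : D (L' ×ˢ W) = 0 :=
      measure_mono_null (Set.prod_mono_left hsub) hLW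
    rw [timeDist_apply D L' hL' W hW, hL'W, mul_zero]
  -- the bad set for L' is contained in the bad set for L
  have hsubset : {p : Set.Icc (0:ℝ) 1 × Set.Icc (0:ℝ) 1 | (κ p.1)[|L'] ≠ (κ p.2)[|L']}
      ⊆ {p | (κ p.1)[|L] ≠ (κ p.2)[|L]} := by
    intro p hp
    simp only [Set.mem_setOf_eq] at hp ⊢
    intro heq
    apply hp
    have hLL' : L ∩ L' = L' := Set.inter_eq_self_of_subset_right hsub
    calc (κ p.1)[|L'] = (κ p.1)[|L ∩ L'] := by rw [hLL']
      _ = ((κ p.1)[|L])[|L'] := (cond_cond_eq_cond_inter hmL hL' (κ p.1)).symm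
      _ = ((κ p.2)[|L])[|L'] := by rw [heq]
      _ = (κ p.2)[|L ∩ L'] := cond_cond_eq_cond_inter hmL hL' (κ p.2)
      _ = (κ p.2)[|L'] := by rw [hLL']
  have hacp : (timeDist D L').prod (timeDist D L') ≪ (timeDist D L).prod (timeDist D L) :=
    hac.prod hac
  exact measure_mono_null hsubset (hacp hdrift)
end
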